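/- Let G be a finite group, K a Carter subgroup of G, z ∈ Z(K) with z ≠ e, and suppose any two Carter subgroups of C_G(z) are conjugate in C_G(z). If H is a Carter subgroup of G not conjugate to K in G, then no conjugate of z lies in Z(H). -/

import Mathlib

/-!
Both `K` and the conjugate `x • H` centralize `z`, and being nilpotent and self-normalizing in `G`
they remain Carter subgroups of `C_G(z)`. By hypothesis they are then conjugate by some `c ∈ C_G(z)`,
so `K` and `H` are conjugate in `G` by `x⁻¹ c`.
-/

open Pointwise

/-- A Carter subgroup: a nilpotent self-normalizing subgroup. -/
def IsCarter {G : Type*} [Group G] (H : Subgroup G) : Prop :=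
  Group.IsNilpotent H ∧ Subgroup.normalizer (H : Set G) = H

namespace IsCarter

variable {G : Type*} [Group G]

theorem mulAut_smul {H : Subgroup G} (hH : IsCarter H) (f : MulAut G) : IsCarter (f • H) :=
  ⟨(Group.isNilpotent_congr (Subgroup.equivSMul f H)).mp hH.1, by
    rw [Subgroup.pointwise_smul_def]
    exact (Subgroup.map_equiv_normalizer_eq H f).symm.trans (congrArg _ hH.2)⟩

theorem subgroupOf {H C : Subgroup G} (hH : IsCarter H) (hHC : H ≤ C) :
    IsCarter (H.subgroupOf C) :=
  ⟨(Group.isNilpotent_congr (Subgroup.subgroupOfEquivOfLe hHC).symm).mp hH.1, by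
    rw [← Subgroup.subgroupOf_normalizer_eq hHC, hH.2]⟩

end IsCarter

theorem Subgroup.conj_smul_eq_of_subgroupOf {G : Type*} [Group G] {C H K : Subgroup G}
    (hH : H ≤ C) (hK : K ≤ C) {c : C} (hc : MulAut.conj c • H.subgroupOf C = K.subgroupOf C) :
    MulAut.conj (c : G) • H = K := by
  rwa [conj_smul_subgroupOf hH, subgroupOf_inj, inf_of_le_left (conj_smul_le_of_le hH c),
    inf_of_le_left hK] at hc

theorem Subgroup.conj_smul_le_centralizer_singleton {G : Type*} [Group G] {H : Subgroup G}
    {z x : G} (hH : H ≤ centralizer {x⁻¹ * z * x}) : MulAut.conj x • H ≤ centralizer {z} := by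
  rintro _ ⟨h, hh, rfl⟩
  have hcomm : h * (x⁻¹ * z * x) = x⁻¹ * z * x * h := mem_centralizer_singleton_iff.mp (hH hh)
  rw [mem_centralizer_singleton_iff]
  show x * h * x⁻¹ * z = z * (x * h * x⁻¹)
  calc x * h * x⁻¹ * z = x * (h * (x⁻¹ * z * x)) * x⁻¹ := by group
    _ = x * (x⁻¹ * z * x * h) * x⁻¹ := by rw [hcomm]
    _ = z * (x * h * x⁻¹) := by group

theorem no_conjugate_in_center_of_nonconjugate_carter_general {G : Type*} [Group G]
    (K : Subgroup G) (hK : IsCarter K) (z : G)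
    (hzc : ∀ k ∈ K, k * z = z * k)
    (hconj : ∀ K₁ K₂ : Subgroup (Subgroup.centralizer {z} : Subgroup G),
      IsCarter K₁ → IsCarter K₂ →
        ∃ c : (Subgroup.centralizer {z} : Subgroup G), MulAut.conj c • K₁ = K₂)
    (H : Subgroup G) (hH : IsCarter H)
    (hnc : ¬∃ x : G, MulAut.conj x • K = H) :
    ∀ x : G, ¬(x⁻¹ * z * x ∈ H ∧ ∀ h ∈ H, h * (x⁻¹ * z * x) = (x⁻¹ * z * x) * h) := by
  rintro x ⟨-, hcomm⟩
  have hKC : K ≤ Subgroup.centralizer {z} := fun k hk =>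
    Subgroup.mem_centralizer_singleton_iff.mpr (hzc k hk)
  have hHC : MulAut.conj x • H ≤ Subgroup.centralizer {z} :=
    Subgroup.conj_smul_le_centralizer_singleton fun h hh =>
      Subgroup.mem_centralizer_singleton_iff.mpr (hcomm h hh)
  obtain ⟨c, hc⟩ := hconj _ _ (hK.subgroupOf hKC) ((hH.mulAut_smul _).subgroupOf hHC)
  refine hnc ⟨x⁻¹ * c, ?_⟩
  rw [map_mul, mul_smul, Subgroup.conj_smul_eq_of_subgroupOf hKC hHC hc, ← mul_smul, ← map_mul,
    inv_mul_cancel, map_one, one_smul]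

theorem no_conjugate_in_center_of_nonconjugate_carter {G : Type*} [Group G] [Finite G]
    (K : Subgroup G) (hK : IsCarter K) (z : G) (hz : z ≠ 1)
    (hzK : z ∈ K) (hzc : ∀ k ∈ K, k * z = z * k)
    (hconj : ∀ K₁ K₂ : Subgroup (Subgroup.centralizer {z} : Subgroup G),
      IsCarter K₁ → IsCarter K₂ →
        ∃ c : (Subgroup.centralizer {z} : Subgroup G), MulAut.conj c • K₁ = K₂)
    (H : Subgroup G) (hH : IsCarter H)
    (hnc : ¬∃ x : G, MulAut.conj x • K = H) :
    ∀ x : G, ¬(x⁻¹ * z * x ∈ H ∧ ∀ h ∈ H, h * (x⁻¹ * z * x) = (x⁻¹ * z * x) * h) :=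
  no_conjugate_in_center_of_nonconjugate_carter_general K hK z hzc hconj H hH hnc
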